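/- The number of intervals of the Mockingbird lattice M(d), d >= 1, equals a_1(d-1), where for each k >= 1 the sequences a_k are defined by a_k(0) = 1 and a_k(n) = a_k(n-1)^2 + sum_{i=0}^{k} binomial(k, i) * a_{k+i}(n-1) for n >= 1. The number of intervals of M(d) for d = 0, 1, 2, ... is 1, 1, 3, 17, 371, 144513. -/

import Mathlib

/-!
Above `a b` with `a ≠ M` lie exactly the terms `a' b'` with `a ≤ a'` and `b ≤ b'`, while above
`M b` lie the terms `M b'` with `b ≤ b'` and the terms `u v` with `b ≤ u` and `b ≤ v`; these two
kinds never coincide when `b ≠ M`. So the up-sets satisfy `|↑(a b)| = |↑a| |↑b|` and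
`|↑(M b)| = n + n²` with `n = |↑b|`. Let `F_d(k) = ∑_{t ∈ M(d)} |↑t|^k`, the number of multichains
`t ≤ y₁, …, y_k` in `M(d)`; the intervals are counted by `F_d(1)`. Since `M(d + 2)` is the disjoint
union of `M · M(d + 1)` and `M(d + 1) · M(d + 1)`, expanding `(n + n²)^k = ∑ C(k, i) n^(k + i)`
gives `F_{d+2}(k) = F_{d+1}(k)² + ∑_i C(k, i) F_{d+1}(k + i)`, and `F_1 = 1`: so `F_{d+1}(k) = a_k(d)`.
-/

inductive MTerm : Type
  | M : MTerm
  | var : ℕ → MTerm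
  | app : MTerm → MTerm → MTerm

/-- One-step rewrite of the Mockingbird system: replace a subterm `M s` by `s s`. -/
inductive MStep : MTerm → MTerm → Prop
  | mock (s : MTerm) : MStep (.app .M s) (.app s s)
  | left {t t' : MTerm} (u : MTerm) : MStep t t' → MStep (.app t u) (.app t' u)
  | right (u : MTerm) {t t' : MTerm} : MStep t t' → MStep (.app u t) (.app u t')

/-- Rewrite order: reflexive-transitive closure of `MStep`. -/
def MLe : MTerm → MTerm → Prop := Relation.ReflTransGen MStep

/-- A term is a combinator when it contains no variable. -/
def NoVar : MTerm → Prop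
  | .M => True
  | .var _ => False
  | .app a b => NoVar a ∧ NoVar b

/-- Subterm (factor) relation. -/
inductive MSub : MTerm → MTerm → Prop
  | refl (t : MTerm) : MSub t t
  | left {s a : MTerm} (b : MTerm) : MSub s a → MSub s (.app a b)
  | right (a : MTerm) {s b : MTerm} : MSub s b → MSub s (.app a b)

/-- Height: maximal number of internal nodes on a root-to-leaf path. -/
def ht : MTerm → ℕ
  | .M => 0
  | .var _ => 0
  | .app a b => max (ht a) (ht b) + 1

/-- Degree: number of application (internal) nodes. -/
def deg : MTerm → ℕ
  | .M => 0
  | .var _ => 0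
  | .app a b => deg a + deg b + 1

/-- The right comb combinator of degree d: r₀ = M and r_d = M r_{d-1}. -/
def comb : ℕ → MTerm
  | 0 => .M
  | d + 1 => .app .M (comb d)

/-- The family of sequences a_k: a_k(0) = 1 and
a_k(n) = a_k(n-1)² + ∑_{i=0}^{k} C(k, i) a_{k+i}(n-1). -/
def seqA : ℕ → ℕ → ℕ
  | _, 0 => 1
  | k, n + 1 =>
      (seqA k n) ^ 2 + ∑ i ∈ Finset.range (k + 1), Nat.choose k i * seqA (k + i) n

deriving instance DecidableEq for MTerm

open Finset

theorem add_sq_pow_eq_sum {R : Type*} [CommSemiring R] (x : R) (k : ℕ) :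
    (x + x ^ 2) ^ k = ∑ i ∈ range (k + 1), k.choose i * x ^ (k + i) := by
  rw [add_comm, add_pow]
  refine sum_congr rfl fun i hi => ?_
  have hik : i ≤ k := Nat.lt_succ_iff.1 (mem_range.1 hi)
  rw [← pow_mul, ← pow_add, mul_comm]
  congr 2
  omega

theorem MStep.exists_eq_app {t t' : MTerm} (h : MStep t t') : ∃ a b, t' = .app a b := by
  cases h <;> exact ⟨_, _, rfl⟩

namespace MLe

theorem refl (t : MTerm) : MLe t t := Relation.ReflTransGen.refl

theorem iff_eq_of_forall_not_mstep {t c : MTerm} (ht : ∀ t', ¬MStep t t') : MLe t c ↔ c = t := by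
  refine ⟨fun h => ?_, fun h => h ▸ refl t⟩
  rcases Relation.ReflTransGen.cases_head h with rfl | ⟨t', hstep, -⟩
  · rfl
  · exact absurd hstep (ht t')

theorem eq_M_of_le_M {t : MTerm} (h : MLe t .M) : t = .M := by
  rcases Relation.ReflTransGen.cases_tail h with rfl | ⟨b, -, hb⟩
  · rfl
  · obtain ⟨_, _, h⟩ := hb.exists_eq_app
    cases h

theorem app_congr {a a' b b' : MTerm} (ha : MLe a a') (hb : MLe b b') :
    MLe (.app a b) (.app a' b') :=
  Relation.ReflTransGen.trans
    (Relation.ReflTransGen.lift (MTerm.app · b) (fun _ _ => MStep.left b) _ _ ha)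
    (Relation.ReflTransGen.lift (MTerm.app a') (fun _ _ => MStep.right a') _ _ hb)

theorem M_app_le_app {t u v : MTerm} (hu : MLe t u) (hv : MLe t v) :
    MLe (.app .M t) (.app u v) :=
  Relation.ReflTransGen.head (MStep.mock t) (app_congr hu hv)

theorem app_iff {a b c : MTerm} (ha : a ≠ .M) :
    MLe (.app a b) c ↔ ∃ a', MLe a a' ∧ ∃ b', MLe b b' ∧ .app a' b' = c := by
  refine ⟨fun h => ?_, ?_⟩
  · induction h with
    | refl => exact ⟨a, refl a, b, refl b, rfl⟩
    | tail _ step ih =>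
      obtain ⟨a', ha', b', hb', rfl⟩ := ih
      cases step with
      | mock => exact absurd (eq_M_of_le_M ha') ha
      | left _ hs => exact ⟨_, ha'.tail hs, b', hb', rfl⟩
      | right _ hs => exact ⟨a', ha', _, hb'.tail hs, rfl⟩
  · rintro ⟨a', ha', b', hb', rfl⟩
    exact app_congr ha' hb'

theorem M_app_iff {b c : MTerm} :
    MLe (.app .M b) c ↔
      (∃ b', MLe b b' ∧ .app .M b' = c) ∨ ∃ u, MLe b u ∧ ∃ v, MLe b v ∧ .app u v = c := by
  refine ⟨fun h => ?_, ?_⟩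
  · induction h with
    | refl => exact .inl ⟨b, refl b, rfl⟩
    | tail _ step ih =>
      rcases ih with ⟨b', hb', rfl⟩ | ⟨u, hu, v, hv, rfl⟩
      · cases step with
        | mock => exact .inr ⟨b', hb', b', hb', rfl⟩
        | left _ hs => cases hs
        | right _ hs => exact .inl ⟨_, hb'.tail hs, rfl⟩
      · cases step with
        | mock => exact .inr ⟨v, hv, v, hv, rfl⟩
        | left _ hs => exact .inr ⟨_, hu.tail hs, v, hv, rfl⟩
        | right _ hs => exact .inr ⟨u, hu, _, hv.tail hs, rfl⟩
  · rintro (⟨b', hb', rfl⟩ | ⟨u, hu, v, hv, rfl⟩)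
    · exact app_congr (refl _) hb'
    · exact M_app_le_app hu hv

end MLe

namespace MTerm

def up : MTerm → Finset MTerm
  | .app .M b => (up b).image (.app .M) ∪ image₂ .app (up b) (up b)
  | .app a b => image₂ .app (up a) (up b)
  | t => {t}

theorem mem_up {t c : MTerm} : c ∈ up t ↔ MLe t c := by
  induction t generalizing c with
  | M | var n =>
    simp only [up, mem_singleton]
    rw [MLe.iff_eq_of_forall_not_mstep fun _ h => by cases h]
  | app a b iha ihb =>
    by_cases ha : a = .M
    · subst ha
      simp [up, MLe.M_app_iff, ihb]
    · rw [up.eq_2 _ _ ha, MLe.app_iff ha]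
      simp [mem_image₂, iha, ihb]

theorem M_mem_up_iff {t : MTerm} : M ∈ up t ↔ t = M :=
  mem_up.trans ⟨MLe.eq_M_of_le_M, fun h => h ▸ MLe.refl t⟩

theorem injective2_app : Function.Injective2 app := fun _ _ _ _ h => app.inj h

theorem disjoint_image_M_app_image₂_app {s s' s'' : Finset MTerm} (hs : M ∉ s) :
    Disjoint (s'.image (app M)) (image₂ app s s'') := by
  refine disjoint_left.2 fun c hc hc' => ?_
  obtain ⟨b, -, rfl⟩ := mem_image.1 hc
  obtain ⟨u, hu, v, -, huv⟩ := mem_image₂.1 hc'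
  exact hs ((app.inj huv).1 ▸ hu)

theorem card_up_app {a b : MTerm} (ha : a ≠ M) : #(up (app a b)) = #(up a) * #(up b) := by
  rw [up.eq_2 _ _ ha, card_image₂ injective2_app]

theorem card_up_M_app {b : MTerm} (hb : b ≠ M) : #(up (app M b)) = #(up b) + #(up b) ^ 2 := by
  rw [up, card_union_of_disjoint (disjoint_image_M_app_image₂_app (mt M_mem_up_iff.1 hb)),
    card_image_of_injective _ fun _ _ h => (app.inj h).2, card_image₂ injective2_app, sq]

/-- For `s = up (comb d)` this counts the multichains `t ≤ y₁, …, yₖ` of `M(d)`. -/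
def upPowSum (s : Finset MTerm) (k : ℕ) : ℕ := ∑ t ∈ s, #(up t) ^ k

theorem upPowSum_image₂_app {s s' : Finset MTerm} (hs : M ∉ s) (k : ℕ) :
    upPowSum (image₂ app s s') k = upPowSum s k * upPowSum s' k := by
  rw [upPowSum, ← image_uncurry_product, sum_image injective2_app.uncurry.injOn,
    sum_product, upPowSum, upPowSum, sum_mul_sum]
  refine sum_congr rfl fun a ha => sum_congr rfl fun b _ => ?_
  rw [Function.uncurry_apply_pair, card_up_app (ne_of_mem_of_not_mem ha hs), mul_pow]

theorem upPowSum_image_M_app {s : Finset MTerm} (hs : M ∉ s) (k : ℕ) :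
    upPowSum (s.image (app M)) k = ∑ i ∈ range (k + 1), k.choose i * upPowSum s (k + i) := by
  rw [upPowSum, sum_image fun _ _ _ _ h => (app.inj h).2]
  simp_rw [upPowSum, mul_sum]
  rw [sum_comm]
  refine sum_congr rfl fun b hb => ?_
  rw [card_up_M_app (ne_of_mem_of_not_mem hb hs), add_sq_pow_eq_sum]
  simp only [Nat.cast_id]

theorem upPowSum_up_M_app {b : MTerm} (hb : b ≠ M) (k : ℕ) :
    upPowSum (up (app M b)) k =
      upPowSum (up b) k ^ 2 + ∑ i ∈ range (k + 1), k.choose i * upPowSum (up b) (k + i) := by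
  have hM : M ∉ up b := mt M_mem_up_iff.1 hb
  rw [up, upPowSum, sum_union (disjoint_image_M_app_image₂_app hM), ← upPowSum, ← upPowSum,
    upPowSum_image_M_app hM, upPowSum_image₂_app hM, sq, add_comm]

theorem comb_succ_ne_M (d : ℕ) : comb (d + 1) ≠ M := nofun

theorem upPowSum_up_comb_succ (d k : ℕ) : upPowSum (up (comb (d + 1))) k = seqA k d := by
  induction d generalizing k with
  | zero => simp [upPowSum, seqA, show up (comb 1) = {comb 1} from rfl]
  | succ d ih =>
    rw [comb, upPowSum_up_M_app (comb_succ_ne_M d), seqA]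
    simp_rw [ih]

theorem card_intervals (s : MTerm) :
    Nat.card {p : MTerm × MTerm // MLe s p.1 ∧ MLe p.1 p.2} = upPowSum (up s) 1 := by
  let e : {p : MTerm × MTerm // MLe s p.1 ∧ MLe p.1 p.2} ≃ Σ t : up s, up t :=
    { toFun p := ⟨⟨p.1.1, mem_up.2 p.2.1⟩, ⟨p.1.2, mem_up.2 p.2.2⟩⟩
      invFun x := ⟨(x.1, x.2), mem_up.1 x.1.2, mem_up.1 x.2.2⟩ }
  rw [Nat.card_congr e, Nat.card_sigma, upPowSum]
  simp only [Nat.card_eq_fintype_card, Fintype.card_coe, pow_one]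
  exact sum_coe_sort (up s) fun t => #(up t)

end MTerm

/-- The number of intervals of the Mockingbird lattice M(d) equals a₁(d-1) for d ≥ 1;
the numbers of intervals of M(0), M(1), … are 1, 1, 3, 17, 371, 144513. -/
theorem mockingbird_intervals :
    Nat.card {p : MTerm × MTerm // MLe (comb 0) p.1 ∧ MLe p.1 p.2} = 1 ∧
    (∀ d : ℕ, 1 ≤ d →
      Nat.card {p : MTerm × MTerm // MLe (comb d) p.1 ∧ MLe p.1 p.2} = seqA 1 (d - 1)) ∧
    seqA 1 0 = 1 ∧ seqA 1 1 = 3 ∧ seqA 1 2 = 17 ∧ seqA 1 3 = 371 ∧ seqA 1 4 = 144513 := by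
  refine ⟨?_, fun d hd => ?_, by decide, by decide, by decide, by decide, by decide⟩
  · rw [MTerm.card_intervals]
    rfl
  · obtain ⟨d, rfl⟩ := Nat.exists_eq_add_of_le' hd
    rw [MTerm.card_intervals, MTerm.upPowSum_up_comb_succ, Nat.add_sub_cancel]
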